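/- Let s = s_1, which is initial in c, and let y ∈ W_{⟨s⟩} be sc-sortable. Then the Cambrian cone Cone_c(y) ⊆ V* equals the Minkowski sum ι(Cone_{sc}(y)) + ℝ_{≥0}·ρ_s, where Cone_{sc}(y) ⊆ V_{⟨s⟩}* is the sc-Cambrian cone of y computed in the parabolic subgroup W_{⟨s⟩}, ι : V_{⟨s⟩}* → H_{α_s} is the inverse of the linear isomorphism obtained by restricting functionals in the hyperplane H_{α_s} to V_{⟨s⟩}, and ρ_s ∈ V* is the fundamental coweight dual to α_s. -/

import Mathlib

/-- The underlying (undirected) graph of a quiver on vertex set `Fin n`,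
where `q i j` is the number of arrows from `i` to `j`. -/
def quiverGraph {n : ℕ} (q : Fin n → Fin n → ℕ) : SimpleGraph (Fin n) where
  Adj i j := i ≠ j ∧ q i j + q j i ≠ 0
  symm := ⟨fun i j ⟨h1, h2⟩ => ⟨h1.symm, by omega⟩⟩
  loopless := ⟨fun i h => h.1 rfl⟩

/-- The Coxeter matrix associated to a quiver: `m i j = 2` if there is no arrow
between `i` and `j`, `3` if there is exactly one, and `∞` (encoded `0`) if there
are at least two. -/
def quiverCoxeterMatrix {n : ℕ} (q : Fin n → Fin n → ℕ) : CoxeterMatrix (Fin n) where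
  M i j := if i = j then 1 else
    if q i j + q j i = 0 then 2 else if q i j + q j i = 1 then 3 else 0
  isSymm := by
    refine Matrix.IsSymm.ext fun i j => ?_
    try dsimp only
    rcases eq_or_ne i j with h | h
    · simp [h]
    · rw [if_neg h, if_neg (Ne.symm h), Nat.add_comm (q j i) (q i j)]
  diagonal := fun i => by simp
  off_diagonal := fun i j h => by
    simp only [if_neg h]
    split <;> [skip; split] <;> simp

variable {n : ℕ} {W : Type*} [Group W] {M : CoxeterMatrix (Fin n)}

/-- The (right) weak order on `W`: `v ≤ w` iff `ℓ(w) = ℓ(v) + ℓ(v⁻¹ w)`. -/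
def weakLe (cs : CoxeterSystem M W) (v w : W) : Prop :=
  cs.length w = cs.length v + cs.length (v⁻¹ * w)

/-- The strict weak order. -/
def weakLt (cs : CoxeterSystem M W) (v w : W) : Prop :=
  weakLe cs v w ∧ v ≠ w

/-- The Coxeter element `c = s₁ s₂ ⋯ sₙ`. -/
def coxeterElement (cs : CoxeterSystem M W) : W :=
  cs.wordProd (List.finRange n)

/-- `w` admits a reduced expression `c⁽⁰⁾ c⁽¹⁾ ⋯ c⁽ᵐ⁾` where each `c⁽ᵗ⁾` is a
subword of the word `cw` and the supports of the `c⁽ᵗ⁾` are weakly decreasing. -/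
def IsSortableWord (cs : CoxeterSystem M W) (cw : List (Fin n)) (w : W) : Prop :=
  ∃ L : List (List (Fin n)),
    (∀ l ∈ L, l.Sublist cw) ∧
    L.Chain' (fun a b => ∀ i ∈ b, i ∈ a) ∧
    cs.IsReduced L.flatten ∧
    cs.wordProd L.flatten = w

/-- `w` is `c`-sortable for the Coxeter element `c = s₁ s₂ ⋯ sₙ`. -/
def IsCSortable (cs : CoxeterSystem M W) (w : W) : Prop :=
  IsSortableWord cs (List.finRange n) w

/-- `p` is the image of `w` under Reading's projection `π^c` associated to the
Coxeter element given (as a word) by `cw`: `p` is sortable, `p ≤ w` in weak order,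
and every sortable element below `w` is below `p`. -/
def IsPiWord (cs : CoxeterSystem M W) (cw : List (Fin n)) (w p : W) : Prop :=
  IsSortableWord cs cw p ∧ weakLe cs p w ∧
    ∀ z, IsSortableWord cs cw z → weakLe cs z w → weakLe cs z p

/-- `p = π^c(w)`, for `c = s₁ s₂ ⋯ sₙ`. -/
def IsPiC (cs : CoxeterSystem M W) (w p : W) : Prop :=
  IsPiWord cs (List.finRange n) w p

open Pointwise

/-- The simple root `αᵢ` in `V = Fin n → ℝ` (the `i`-th standard basis vector). -/
noncomputable def simpleRootV {n : ℕ} (i : Fin n) : Fin n → ℝ := Pi.single i 1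

/-- The value `(αᵢ, αⱼ)` of the symmetric bilinear form on the simple roots:
`2` on the diagonal and minus the number of arrows between `i` and `j` otherwise. -/
def cartanEntry {n : ℕ} (q : Fin n → Fin n → ℕ) (i j : Fin n) : ℝ :=
  if i = j then 2 else -((q i j + q j i : ℕ) : ℝ)

/-- The simple reflection `sᵢ` acting on `V`: `v ↦ v − (αᵢ, v) αᵢ`. -/
noncomputable def simpleReflectV {n : ℕ} (q : Fin n → Fin n → ℕ) (i : Fin n)
    (v : Fin n → ℝ) : Fin n → ℝ :=
  v - (∑ j, cartanEntry q i j * v j) • simpleRootV i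

/-- `IsCSet q cs cw x C` means that `C = C_c(x)` where the Coxeter element `c`
(of the current standard parabolic subgroup) is given by the reduced word `cw`
and `x` is a `c`-sortable element of that parabolic subgroup.  This is the
recursive definition: `C_c(1) = ∅` in the trivial parabolic; if `ℓ(sx) > ℓ(x)`
(with `s` the initial letter of `cw`) then `C_c(x) = C_{sc}(x) ∪ {α_s}`, and if
`ℓ(sx) < ℓ(x)` then `C_c(x) = s · C_{scs}(sx)`. -/
inductive IsCSet {n : ℕ} (q : Fin n → Fin n → ℕ) {W : Type*} [Group W]
    (cs : CoxeterSystem (quiverCoxeterMatrix q) W) :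
    List (Fin n) → W → Set (Fin n → ℝ) → Prop
  | nil : IsCSet q cs [] 1 ∅
  | up {i : Fin n} {cw : List (Fin n)} {x : W} {C : Set (Fin n → ℝ)} :
      cs.length x < cs.length (cs.simple i * x) →
      IsCSet q cs cw x C →
      IsCSet q cs (i :: cw) x (insert (simpleRootV i) C)
  | down {i : Fin n} {cw : List (Fin n)} {x : W} {C : Set (Fin n → ℝ)} :
      cs.length (cs.simple i * x) < cs.length x →
      IsCSet q cs (cw ++ [i]) (cs.simple i * x) C →
      IsCSet q cs (i :: cw) x (simpleReflectV q i '' C)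

/-!
The recursion defining `C_{sc}(y)` writes `y` as a word in the generators other than `s`. Such
an element does not have `s` as a left descent, so the recursion defining `C_c(y)` takes its
first branch: `C_c(y) = C_{sc}(y) ∪ {α_s}`. All roots of `C_{sc}(y)` lie in `V_⟨s⟩`, so a
functional nonnegative on `C_c(y)` splits as `(f - f(α_s) ρ_s) + f(α_s) ρ_s`, which is the
claimed Minkowski sum.

That `ℓ(s y) > ℓ(y)` follows from Tits' parity argument. The parity of the number of occurrences
of a reflection `t` in the right inversion sequence of a word depends only on the product of the
word. If `s` were a left descent, `y⁻¹` would have a reduced word ending in `s`, in whose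
inversion sequence `s` occurs exactly once; but writing `y⁻¹` in the generators other than `s`,
every inversion lies in `W_⟨s⟩`, which does not contain `s`: in the geometric representation
`W_⟨s⟩` fixes the `s`-coordinate, while `s α_s = -α_s`.
-/

lemma CoxeterMatrix.isLiftable_of_comp_iterate {B X : Type*} {M : CoxeterMatrix B}
    {f : B → Equiv.Perm X} (h : ∀ i j, (f i ∘ f j)^[M i j] = id) : M.IsLiftable f :=
  fun i j => DFunLike.coe_injective <| by rw [Equiv.Perm.coe_pow, Equiv.Perm.coe_mul, h]; rfl

lemma conj_eq_iff_eq_conj {G : Type*} [Group G] {g t u : G} :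
    g * t * g⁻¹ = u ↔ t = g⁻¹ * u * g := by
  constructor <;> rintro rfl <;> group

section TitsMap

variable {W : Type*} [Group W] [DecidableEq W]

def titsMap (x : W) (p : W × ZMod 2) : W × ZMod 2 :=
  (x * p.1 * x, p.2 + if p.1 = x then 1 else 0)

lemma titsMap_involutive {x : W} (hx : x * x = 1) : Function.Involutive (titsMap x) := by
  rintro ⟨t, ε⟩
  have hx' : x⁻¹ = x := inv_eq_of_mul_eq_one_right hx
  have hconj : x * (x * t * x) * x = t := by
    calc x * (x * t * x) * x = x * x * t * (x * x) := by group
      _ = t := by rw [hx, one_mul, mul_one]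
  have hfix : x * t * x = x ↔ t = x := by
    simpa [hx', hx] using conj_eq_iff_eq_conj (g := x) (t := t) (u := x)
  simp only [titsMap, hconj, hfix, add_assoc, CharTwo.add_self_eq_zero, add_zero]

lemma titsMap_comp_iterate {x y : W} (hx : x * x = 1) (hy : y * y = 1) (k : ℕ) (t : W)
    (ε : ZMod 2) :
    (titsMap x ∘ titsMap y)^[k] (t, ε) =
      ((x * y) ^ k * t * ((x * y) ^ k)⁻¹,
        ε + ((List.range (2 * k)).map fun v => (y * x) ^ v * y).count t) := by
  have hx' : x⁻¹ = x := inv_eq_of_mul_eq_one_right hx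
  have hy' : y⁻¹ = y := inv_eq_of_mul_eq_one_right hy
  have hinv : ∀ k : ℕ, ((x * y) ^ k)⁻¹ = (y * x) ^ k := fun k => by
    rw [← inv_pow, mul_inv_rev, hx', hy']
  have hsemi : ∀ k : ℕ, y * (x * y) ^ k = (y * x) ^ k * y := fun k =>
    (SemiconjBy.pow_right (by simp [SemiconjBy, mul_assoc]) k : SemiconjBy y _ _)
  induction k with
  | zero => simp
  | succ k ih =>
    rw [Function.iterate_succ_apply', ih]
    simp only [titsMap, Function.comp_apply]
    have hfirst : (x * y) ^ k * t * ((x * y) ^ k)⁻¹ = y ↔ (y * x) ^ (2 * k) * y = t := by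
      rw [conj_eq_iff_eq_conj, hinv, mul_assoc, hsemi, ← mul_assoc, ← pow_add, two_mul, eq_comm]
    have hsecond : y * ((x * y) ^ k * t * ((x * y) ^ k)⁻¹) * y = x ↔
        (y * x) ^ (2 * k + 1) * y = t := by
      have hconj : y * ((x * y) ^ k * t * ((x * y) ^ k)⁻¹) * y =
          y * (x * y) ^ k * t * (y * (x * y) ^ k)⁻¹ := by
        rw [mul_inv_rev, hy']; group
      rw [hconj, conj_eq_iff_eq_conj, mul_inv_rev, hy', hinv, hsemi, eq_comm,
        show 2 * k + 1 = k + (k + 1) by ring, pow_add, pow_succ']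
      simp only [mul_assoc]
    refine Prod.ext ?_ ?_
    · rw [pow_succ', mul_inv_rev, mul_inv_rev, hx', hy']
      simp only [mul_assoc]
    · rw [show 2 * (k + 1) = 2 * k + 1 + 1 by ring, List.range_succ, List.range_succ]
      simp only [List.map_append, List.count_append, List.map_cons, List.map_nil,
        List.count_singleton, beq_iff_eq, hfirst, hsecond]
      push_cast
      ring

/-- The `2m` reflections `(y * x) ^ v * y`, `v < 2m`, repeat with period `m`, so each occurs an
even number of times. -/
lemma titsMap_comp_iterate_eq_id {x y : W} (hx : x * x = 1) (hy : y * y = 1) {m : ℕ}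
    (hm : (x * y) ^ m = 1) : (titsMap x ∘ titsMap y)^[m] = id := by
  have hm' : (y * x) ^ m = 1 := by
    rw [← inv_inj, ← inv_pow, mul_inv_rev, inv_eq_of_mul_eq_one_right hx,
      inv_eq_of_mul_eq_one_right hy, hm, inv_one]
  have hperiodic : ((fun v => (y * x) ^ v * y) ∘ fun v => m + v) = fun v => (y * x) ^ v * y := by
    funext v; simp [pow_add, hm']
  funext ⟨t, ε⟩
  rw [titsMap_comp_iterate hx hy, hm, one_mul, inv_one, mul_one, two_mul, List.range_add,
    List.map_append, List.map_map, hperiodic, List.count_append, Nat.cast_add,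
    CharTwo.add_self_eq_zero, add_zero, id]

end TitsMap

namespace CoxeterSystem

variable {B W : Type*} [Group W] {M : CoxeterMatrix B} (cs : CoxeterSystem M W)

section TitsRepresentation

variable [DecidableEq W]

def titsPerm (i : B) : Equiv.Perm (W × ZMod 2) :=
  (titsMap_involutive (cs.simple_mul_simple_self i)).toPerm

lemma isLiftable_titsPerm : M.IsLiftable cs.titsPerm :=
  CoxeterMatrix.isLiftable_of_comp_iterate fun i j =>
    titsMap_comp_iterate_eq_id (cs.simple_mul_simple_self i) (cs.simple_mul_simple_self j)
      (cs.simple_mul_simple_pow i j)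

def titsRep : W →* Equiv.Perm (W × ZMod 2) := cs.lift ⟨cs.titsPerm, cs.isLiftable_titsPerm⟩

lemma titsRep_wordProd (ω : List B) (t : W) (ε : ZMod 2) :
    cs.titsRep (cs.wordProd ω) (t, ε) =
      (cs.wordProd ω * t * (cs.wordProd ω)⁻¹, ε + (cs.rightInvSeq ω).count t) := by
  induction ω with
  | nil => simp [rightInvSeq]
  | cons i ω ih =>
    rw [wordProd_cons, map_mul, Equiv.Perm.mul_apply, ih]
    simp only [titsRep, lift_apply_simple, titsPerm, Function.Involutive.coe_toPerm, titsMap]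
    refine Prod.ext (by simp [mul_inv_rev, mul_assoc]) ?_
    simp only [rightInvSeq, List.count_cons, beq_iff_eq, conj_eq_iff_eq_conj, eq_comm (a := t)]
    push_cast
    ring

theorem count_rightInvSeq_eq_of_wordProd_eq {ω ω' : List B} (h : cs.wordProd ω = cs.wordProd ω')
    (t : W) : ((cs.rightInvSeq ω).count t : ZMod 2) = (cs.rightInvSeq ω').count t := by
  have hrep := cs.titsRep_wordProd ω' t 0
  rw [← h, titsRep_wordProd] at hrep
  simpa using congrArg Prod.snd hrep

end TitsRepresentation

lemma wordProd_mem {H : Subgroup W} {ω : List B} (hω : ∀ i ∈ ω, cs.simple i ∈ H) :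
    cs.wordProd ω ∈ H :=
  H.list_prod_mem (by simpa using hω)

lemma mem_of_mem_rightInvSeq {H : Subgroup W} {ω : List B} (hω : ∀ i ∈ ω, cs.simple i ∈ H)
    {t : W} (ht : t ∈ cs.rightInvSeq ω) : t ∈ H := by
  induction ω with
  | nil => simp at ht
  | cons i ω ih =>
    have hω' : ∀ j ∈ ω, cs.simple j ∈ H := fun j hj => hω j (List.mem_cons_of_mem i hj)
    rcases List.mem_cons.mp ht with rfl | ht
    · exact H.mul_mem (H.mul_mem (H.inv_mem (cs.wordProd_mem hω')) (hω i List.mem_cons_self))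
        (cs.wordProd_mem hω')
    · exact ih hω' ht

theorem not_isRightDescent_wordProd {H : Subgroup W} {ω : List B}
    (hω : ∀ i ∈ ω, cs.simple i ∈ H) {z : B} (hz : cs.simple z ∉ H) :
    ¬cs.IsRightDescent (cs.wordProd ω) z := by
  classical
  intro hdesc
  obtain ⟨ψ, hψ, hψω⟩ := cs.exists_isReduced (cs.wordProd ω * cs.simple z)
  have hprod : cs.wordProd (ψ.concat z) = cs.wordProd ω := by
    rw [wordProd_concat, ← hψω, simple_mul_simple_cancel_right]
  have hred : cs.IsReduced (ψ.concat z) := by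
    rw [IsReduced, hprod, List.length_concat, ← hψ.eq, ← hψω]
    exact ((cs.isRightDescent_iff).mp hdesc).symm
  have hone : (cs.rightInvSeq (ψ.concat z)).count (cs.simple z) = 1 :=
    List.count_eq_one_of_mem hred.nodup_rightInvSeq (by rw [rightInvSeq_concat]; simp)
  have hzero : (cs.rightInvSeq ω).count (cs.simple z) = 0 :=
    List.count_eq_zero_of_not_mem fun h => hz (cs.mem_of_mem_rightInvSeq hω h)
  have hparity := cs.count_rightInvSeq_eq_of_wordProd_eq hprod (cs.simple z)
  rw [hone, hzero] at hparity
  exact absurd hparity (by decide)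

theorem not_isLeftDescent_wordProd {H : Subgroup W} {ω : List B}
    (hω : ∀ i ∈ ω, cs.simple i ∈ H) {z : B} (hz : cs.simple z ∉ H) :
    ¬cs.IsLeftDescent (cs.wordProd ω) z := by
  rw [← inv_inv (cs.wordProd ω), isLeftDescent_inv_iff, ← wordProd_reverse]
  exact cs.not_isRightDescent_wordProd (by simpa using hω) hz

end CoxeterSystem

section GeometricRepresentation

variable {n : ℕ} {q : Fin n → Fin n → ℕ}

lemma cartanEntry_self (i : Fin n) : cartanEntry q i i = 2 := if_pos rfl

lemma cartanEntry_comm (i j : Fin n) : cartanEntry q i j = cartanEntry q j i := by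
  simp only [cartanEntry, eq_comm (a := i), Nat.add_comm (q i j)]

lemma simpleReflectV_eq (i : Fin n) (v : Fin n → ℝ) :
    simpleReflectV q i v = v - (cartanEntry q i ⬝ᵥ v) • simpleRootV i := rfl

lemma simpleReflectV_apply_of_ne {i z : Fin n} (h : i ≠ z) (v : Fin n → ℝ) :
    simpleReflectV q i v z = v z := by
  simp [simpleReflectV, simpleRootV, Pi.single_eq_of_ne h.symm]

lemma simpleReflectV_add_smul_add_smul (i k : Fin n) (v : Fin n → ℝ) (a b : ℝ) :
    simpleReflectV q i (v + a • simpleRootV i + b • simpleRootV k) =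
      v + (-(cartanEntry q i ⬝ᵥ v) - a - b * cartanEntry q i k) • simpleRootV i +
        b • simpleRootV k := by
  simp only [simpleReflectV_eq, dotProduct_add, dotProduct_smul, simpleRootV, dotProduct_single,
    smul_eq_mul, cartanEntry_self]
  module

lemma simpleReflectV_add_smul_add_smul' (i k : Fin n) (v : Fin n → ℝ) (a b : ℝ) :
    simpleReflectV q k (v + a • simpleRootV i + b • simpleRootV k) =
      v + a • simpleRootV i +
        (-(cartanEntry q k ⬝ᵥ v) - b - a * cartanEntry q k i) • simpleRootV k := by
  rw [add_right_comm, simpleReflectV_add_smul_add_smul, add_right_comm]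

lemma simpleReflectV_involutive (i : Fin n) : Function.Involutive (simpleReflectV q i) := by
  intro v
  conv_lhs => rw [← show v + (0 : ℝ) • simpleRootV i + (0 : ℝ) • simpleRootV i = v by simp]
  simp only [simpleReflectV_add_smul_add_smul]
  module

lemma simpleReflectV_comp_iterate_two {i j : Fin n} (h : cartanEntry q i j = 0) :
    (simpleReflectV q i ∘ simpleReflectV q j)^[2] = id := by
  have h' : cartanEntry q j i = 0 := cartanEntry_comm (q := q) i j ▸ h
  funext v
  conv_lhs => rw [← show v + (0 : ℝ) • simpleRootV i + (0 : ℝ) • simpleRootV j = v by simp]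
  simp only [Function.iterate_succ, Function.iterate_zero, Function.comp_apply, id,
    simpleReflectV_add_smul_add_smul, simpleReflectV_add_smul_add_smul', h, h']
  module

lemma simpleReflectV_comp_iterate_three {i j : Fin n} (h : cartanEntry q i j = -1) :
    (simpleReflectV q i ∘ simpleReflectV q j)^[3] = id := by
  have h' : cartanEntry q j i = -1 := cartanEntry_comm (q := q) i j ▸ h
  funext v
  conv_lhs => rw [← show v + (0 : ℝ) • simpleRootV i + (0 : ℝ) • simpleRootV j = v by simp]
  simp only [Function.iterate_succ, Function.iterate_zero, Function.comp_apply, id,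
    simpleReflectV_add_smul_add_smul, simpleReflectV_add_smul_add_smul', h, h']
  module

variable {W : Type*} [Group W]

variable (q) in
noncomputable def simpleReflectPerm (i : Fin n) : Equiv.Perm (Fin n → ℝ) :=
  (simpleReflectV_involutive (q := q) i).toPerm

variable (q) in
lemma isLiftable_simpleReflectPerm :
    (quiverCoxeterMatrix q).IsLiftable (simpleReflectPerm q) := by
  refine CoxeterMatrix.isLiftable_of_comp_iterate fun i j => ?_
  simp only [simpleReflectPerm, Function.Involutive.coe_toPerm]
  show (_ ∘ _)^[if i = j then 1 else
    if q i j + q j i = 0 then 2 else if q i j + q j i = 1 then 3 else 0] = id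
  split_ifs with hij h0 h1
  · subst hij
    exact funext (simpleReflectV_involutive i)
  · exact simpleReflectV_comp_iterate_two (by simp [cartanEntry, hij, h0])
  · exact simpleReflectV_comp_iterate_three (by simp [cartanEntry, hij, h1])
  · rfl

noncomputable def geometricRep (cs : CoxeterSystem (quiverCoxeterMatrix q) W) :
    W →* Equiv.Perm (Fin n → ℝ) :=
  cs.lift ⟨simpleReflectPerm q, isLiftable_simpleReflectPerm q⟩

lemma geometricRep_simple (cs : CoxeterSystem (quiverCoxeterMatrix q) W) (i : Fin n) :
    geometricRep cs (cs.simple i) = simpleReflectPerm q i :=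
  cs.lift_apply_simple (isLiftable_simpleReflectPerm q) i

noncomputable def coordStabilizer (cs : CoxeterSystem (quiverCoxeterMatrix q) W) (z : Fin n) :
    Subgroup W where
  carrier := {w | ∀ v, geometricRep cs w v z = v z}
  one_mem' _ := by rw [map_one, Equiv.Perm.one_apply]
  mul_mem' {a b} ha hb v := by
    rw [map_mul, Equiv.Perm.mul_apply, ha, hb]
  inv_mem' {a} ha v := by
    have h := ha (geometricRep cs a⁻¹ v)
    rwa [← Equiv.Perm.mul_apply, ← map_mul, mul_inv_cancel, map_one, Equiv.Perm.one_apply,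
      eq_comm] at h

lemma mem_coordStabilizer {cs : CoxeterSystem (quiverCoxeterMatrix q) W} {z : Fin n} {w : W} :
    w ∈ coordStabilizer cs z ↔ ∀ v, geometricRep cs w v z = v z :=
  Iff.rfl

lemma simple_mem_coordStabilizer (cs : CoxeterSystem (quiverCoxeterMatrix q) W) {i z : Fin n}
    (h : i ≠ z) : cs.simple i ∈ coordStabilizer cs z :=
  mem_coordStabilizer.mpr fun v => by
    rw [geometricRep_simple]
    exact simpleReflectV_apply_of_ne h v

lemma simple_not_mem_coordStabilizer (cs : CoxeterSystem (quiverCoxeterMatrix q) W) (z : Fin n) :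
    cs.simple z ∉ coordStabilizer cs z := fun h => by
  have hz := mem_coordStabilizer.mp h (simpleRootV z)
  simp [geometricRep_simple, simpleReflectPerm, simpleReflectV_eq, simpleRootV,
    cartanEntry_self] at hz

end GeometricRepresentation

namespace IsCSet

variable {n : ℕ} {W : Type*} [Group W] {q : Fin n → Fin n → ℕ}
  {cs : CoxeterSystem (quiverCoxeterMatrix q) W} {cw : List (Fin n)} {x : W}
  {C C' : Set (Fin n → ℝ)}

lemma unique (h : IsCSet q cs cw x C) (h' : IsCSet q cs cw x C') : C = C' := by
  induction h generalizing C' with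
  | nil => cases h'; rfl
  | up hlen _ ih =>
    cases h' with
    | up _ hsub' => rw [ih hsub']
    | down hlen' _ => omega
  | down hlen _ ih =>
    cases h' with
    | up hlen' _ => omega
    | down _ hsub' => rw [ih hsub']

lemma exists_wordProd_eq (h : IsCSet q cs cw x C) :
    ∃ ω : List (Fin n), (∀ i ∈ ω, i ∈ cw) ∧ cs.wordProd ω = x := by
  induction h with
  | nil => exact ⟨[], by simp, rfl⟩
  | up _ _ ih =>
    obtain ⟨ω, hω, rfl⟩ := ih
    exact ⟨ω, fun i hi => List.mem_cons_of_mem _ (hω i hi), rfl⟩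
  | @down i cw x _ _ _ ih =>
    obtain ⟨ω, hω, hωx⟩ := ih
    refine ⟨i :: ω, fun j hj => ?_, by rw [cs.wordProd_cons, hωx, cs.simple_mul_simple_cancel_left]⟩
    rcases List.mem_cons.mp hj with rfl | hj
    · exact List.mem_cons_self
    · simpa [or_comm] using hω j hj

lemma apply_eq_zero_of_not_mem {z : Fin n} (h : IsCSet q cs cw x C) (hz : z ∉ cw) :
    ∀ β ∈ C, β z = 0 := by
  induction h with
  | nil => simp
  | @up i cw x C _ _ ih =>
    rintro β (rfl | hβ)
    · exact Pi.single_eq_of_ne (by rintro rfl; exact hz List.mem_cons_self) 1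
    · exact ih (fun h => hz (List.mem_cons_of_mem i h)) β hβ
  | @down i cw x C _ _ ih =>
    rintro _ ⟨β, hβ, rfl⟩
    have hiz : i ≠ z := by rintro rfl; exact hz List.mem_cons_self
    rw [simpleReflectV_apply_of_ne hiz]
    exact ih (by simpa [hiz.symm] using hz) β hβ

lemma eq_insert_of_not_isLeftDescent {i : Fin n} (h : IsCSet q cs (i :: cw) x C)
    (hx : ¬cs.IsLeftDescent x i) (h' : IsCSet q cs cw x C') :
    C = insert (simpleRootV i) C' := by
  cases h with
  | up _ hsub => rw [hsub.unique h']
  | down hlen _ => exact absurd hlen hx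

end IsCSet

theorem cone_insert_simpleRootV_eq_add_ray {n : ℕ} {z : Fin n} {C : Set (Fin n → ℝ)}
    (hC : ∀ β ∈ C, β z = 0) :
    {f : Module.Dual ℝ (Fin n → ℝ) | ∀ β ∈ insert (simpleRootV z) C, 0 ≤ f β} =
      {f : Module.Dual ℝ (Fin n → ℝ) | f (simpleRootV z) = 0 ∧ ∀ β ∈ C, 0 ≤ f β} +
      {f : Module.Dual ℝ (Fin n → ℝ) | ∃ t : ℝ, 0 ≤ t ∧
          f = t • (LinearMap.proj (R := ℝ) (φ := fun _ : Fin n => ℝ) z)} := by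
  set ρ : Module.Dual ℝ (Fin n → ℝ) := LinearMap.proj (R := ℝ) (φ := fun _ : Fin n => ℝ) z
  have hρα : ρ (simpleRootV z) = 1 := by simp [ρ, simpleRootV]
  have hρC : ∀ β ∈ C, ρ β = 0 := hC
  ext f
  simp only [Set.mem_ofPred_eq, Set.mem_add, Set.forall_mem_insert]
  constructor
  · rintro ⟨hfα, hfC⟩
    refine ⟨f - f (simpleRootV z) • ρ, ⟨by simp [hρα], fun β hβ => ?_⟩,
      _, ⟨f (simpleRootV z), hfα, rfl⟩, sub_add_cancel _ _⟩
    simpa [hρC β hβ] using hfC β hβ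
  · rintro ⟨g, ⟨hgα, hgC⟩, _, ⟨t, ht, rfl⟩, rfl⟩
    exact ⟨by simpa [hgα, hρα] using ht, fun β hβ => by simpa [hρC β hβ] using hgC β hβ⟩

lemma List.finRange_eq_cons_tail {n : ℕ} (hn : 0 < n) :
    List.finRange n = ⟨0, hn⟩ :: (List.finRange n).tail := by
  obtain ⟨k, rfl⟩ := Nat.exists_eq_add_one_of_ne_zero hn.ne'
  rw [List.finRange_succ]
  rfl

theorem cambrian_cone_eq_parabolic_cone_add_ray_general
    {n : ℕ} (hn : 0 < n) (q : Fin n → Fin n → ℕ)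
    {W : Type*} [Group W] (cs : CoxeterSystem (quiverCoxeterMatrix q) W)
    (y : W)
    (C C' : Set (Fin n → ℝ))
    (hC : IsCSet q cs (List.finRange n) y C)
    (hC' : IsCSet q cs ((List.finRange n).tail) y C') :
    {f : Module.Dual ℝ (Fin n → ℝ) | ∀ β ∈ C, 0 ≤ f β} =
      {f : Module.Dual ℝ (Fin n → ℝ) |
          f (simpleRootV ⟨0, hn⟩) = 0 ∧ ∀ β ∈ C', 0 ≤ f β} +
      {f : Module.Dual ℝ (Fin n → ℝ) | ∃ t : ℝ, 0 ≤ t ∧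
          f = t • (LinearMap.proj (R := ℝ) (φ := fun _ : Fin n => ℝ) ⟨0, hn⟩)} := by
  set z : Fin n := ⟨0, hn⟩
  have hcw := List.finRange_eq_cons_tail hn
  have hz : z ∉ (List.finRange n).tail := (List.nodup_cons.mp (hcw ▸ List.nodup_finRange n)).1
  obtain ⟨ω, hω, rfl⟩ := hC'.exists_wordProd_eq
  have hdesc : ¬cs.IsLeftDescent (cs.wordProd ω) z :=
    cs.not_isLeftDescent_wordProd
      (fun i hi => simple_mem_coordStabilizer cs (ne_of_mem_of_not_mem (hω i hi) hz))
      (simple_not_mem_coordStabilizer cs z)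
  rw [hcw] at hC
  rw [hC.eq_insert_of_not_isLeftDescent hdesc hC']
  exact cone_insert_simpleRootV_eq_add_ray (hC'.apply_eq_zero_of_not_mem hz)

/-- Let `s = s₁` (the initial letter of `c`) and let
`y ∈ W_⟨s⟩` be `sc`-sortable.  Then the Cambrian cone `Cone_c(y) ⊆ V*` is the
Minkowski sum of the cone `Cone_{sc}(y)` drawn in the hyperplane `H_{α_s}`
(i.e. the functionals vanishing on `α_s` and nonnegative on `C_{sc}(y)`) and the
ray spanned by the fundamental coweight `ρ_s` (the coordinate functional at `s`). -/
theorem cambrian_cone_eq_parabolic_cone_add_ray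
    {n : ℕ} (hn : 0 < n) (q : Fin n → Fin n → ℕ)
    (hadm : ∀ i j, q i j ≠ 0 → i < j)
    (hconn : (quiverGraph q).Connected)
    {W : Type*} [Group W] (cs : CoxeterSystem (quiverCoxeterMatrix q) W)
    (y : W)
    (hyP : y ∈ Subgroup.closure (cs.simple '' {j : Fin n | j ≠ ⟨0, hn⟩}))
    (hy : IsSortableWord cs ((List.finRange n).tail) y)
    (C C' : Set (Fin n → ℝ))
    (hC : IsCSet q cs (List.finRange n) y C)
    (hC' : IsCSet q cs ((List.finRange n).tail) y C') :
    {f : Module.Dual ℝ (Fin n → ℝ) | ∀ β ∈ C, 0 ≤ f β} =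
      {f : Module.Dual ℝ (Fin n → ℝ) |
          f (simpleRootV ⟨0, hn⟩) = 0 ∧ ∀ β ∈ C', 0 ≤ f β} +
      {f : Module.Dual ℝ (Fin n → ℝ) | ∃ t : ℝ, 0 ≤ t ∧
          f = t • (LinearMap.proj (R := ℝ) (φ := fun _ : Fin n => ℝ) ⟨0, hn⟩)} :=
  cambrian_cone_eq_parabolic_cone_add_ray_general hn q cs y C C' hC hC'
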